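/- Let n ≥ 3, let D_n = ⟨a,b | a^n = b^2 = 1, bab = a^{-1}⟩, and let S = S₁ ∪ S₂ ⊆ D_n∖{1} with S = S^{-1}, where S₁ ⊆ ⟨a⟩ and S₂ ⊆ b⟨a⟩. If the Cayley graph X(D_n,S) is integral, then S₁ is a union of atoms of the Boolean algebra B(⟨a⟩), and the multiset S₂² = {s₁s₂ : (s₁,s₂) ∈ S₂×S₂} (with multiplicities, over ordered pairs) belongs to the integral cone C(⟨a⟩), i.e., its multiplicity function is constant on each atom of ⟨a⟩. -/

import Mathlib

open DihedralGroup Polynomial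

/-- The degree-2 irreducible character `χ_h` of the dihedral group `D_n`:
`χ_h(a^k) = 2cos(2khπ/n)` and `χ_h(ba^k) = 0`. -/
noncomputable def chi (n h : ℕ) : DihedralGroup n → ℝ
  | .r k => 2 * Real.cos (2 * k.val * h * Real.pi / n)
  | .sr _ => 0

/-- `χ(A) = Σ_{x ∈ A} χ(x)`. -/
noncomputable def chiSum (n h : ℕ) (A : Set (DihedralGroup n)) : ℝ :=
  ∑ᶠ x ∈ A, chi n h x

/-- `χ(A²) = Σ_{x,y ∈ A} χ(xy)`, over ordered pairs. -/
noncomputable def chiSum2 (n h : ℕ) (A : Set (DihedralGroup n)) : ℝ :=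
  ∑ᶠ x ∈ A, ∑ᶠ y ∈ A, chi n h (x * y)

/-- The Cayley graph `X(G,S)`: vertices `G`, with `x,y` adjacent iff `x⁻¹y ∈ S`
(for `S` inverse-closed and not containing `1`). -/
def cayleyGraph {G : Type*} [Group G] (S : Set G) : SimpleGraph G :=
  SimpleGraph.fromRel (fun x y => x⁻¹ * y ∈ S)

open scoped Classical in
/-- The adjacency matrix of a graph, over `ℂ`. -/
noncomputable def adjMat {V : Type*} [Fintype V] (G : SimpleGraph V) : Matrix V V ℂ :=
  Matrix.of fun x y => if G.Adj x y then 1 else 0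

/-- A graph is integral if every eigenvalue of its adjacency matrix is an integer. -/
def IsIntegralGraph {V : Type*} [Fintype V] [DecidableEq V] (G : SimpleGraph V) : Prop :=
  ∀ μ ∈ spectrum ℂ (adjMat G), ∃ z : ℤ, μ = (z : ℂ)

/-- The cyclic subgroup `⟨a⟩` of `D_n`, as a set. -/
def rSet (n : ℕ) : Set (DihedralGroup n) := {x | ∃ k, x = .r k}

/-- The coset `b⟨a⟩` of `D_n`, as a set. -/
def srSet (n : ℕ) : Set (DihedralGroup n) := {x | ∃ k, x = .sr k}

/-- `S` belongs to the Boolean algebra `B(⟨a⟩)`, i.e. `S ⊆ ⟨a⟩` is a union of atoms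
`[a^l] = {a^k : gcd(k,n) = gcd(l,n)}`: membership in `S` is constant on each atom. -/
def InBooleanAlgebra (n : ℕ) (S : Set (DihedralGroup n)) : Prop :=
  S ⊆ rSet n ∧ ∀ k l : ZMod n, Nat.gcd k.val n = Nat.gcd l.val n →
    (DihedralGroup.r k ∈ S ↔ DihedralGroup.r l ∈ S)

/-- The multiplicity of `x` in the multiset `S² = {s₁s₂ : (s₁,s₂) ∈ S × S}` (ordered pairs). -/
noncomputable def sqMult {n : ℕ} (S : Set (DihedralGroup n)) (x : DihedralGroup n) : ℕ :=
  Nat.card {p : DihedralGroup n × DihedralGroup n // p.1 ∈ S ∧ p.2 ∈ S ∧ p.1 * p.2 = x}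

/-- The irreducible character `φ_h` of the cyclic group `⟨a⟩` of order `n`:
`φ_h(a^k) = e^{2πihk/n}`. -/
noncomputable def phi (n h : ℕ) (k : ZMod n) : ℂ :=
  Complex.exp (2 * Real.pi * Complex.I * h * k.val / n)

/-!
Let `ζ = e^{2πi/n}`. For each `h : ZMod n`, the functions `a^j ↦ u ζ^{-jh}`, `ba^j ↦ w ζ^{jh}`
span a subspace invariant under the adjacency operator of `X(D_n, S)`, which acts on `(u, w)` through the `2 × 2` matrix
`[[α, β'], [β, α]]`, where `α`, `β`, `β'` are values of the Fourier transforms of the indicator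
functions of `S₁` and `S₂`. Integrality of its eigenvalues `α ± √(ββ')` forces `α` and `ββ'` to be
rational, and `ββ'` is the Fourier transform of the multiplicity function of `S₂²`. A function
`ZMod n → ℚ` with rational Fourier transform is constant on atoms: the Galois automorphism
`ζ ↦ ζ^t` of `ℚ(ζ)` turns the value of the transform at `h` into its value at `t h`, so the
transform, and by Fourier inversion the function, is invariant under the units of `ZMod n`, and
the atoms are exactly the orbits of the units.
-/

open ZMod
open scoped Matrix

lemma IsPrimitiveRoot.aeval_pow_eq_ratCast {K : Type*} [Field K] [CharZero K] {ζ : K} {N : ℕ}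
    (hζ : IsPrimitiveRoot ζ N) (hN : 0 < N) {P : ℚ[X]} {c : ℚ} (hc : aeval ζ P = c)
    {t : ℕ} (ht : t.Coprime N) : aeval (ζ ^ t) P = c := by
  obtain ⟨Q, hQ⟩ : cyclotomic N ℚ ∣ P - C c := by
    rw [cyclotomic_eq_minpoly_rat hζ hN]
    exact minpoly.dvd ℚ ζ (by simp [hc])
  have hroot : aeval (ζ ^ t) (cyclotomic N ℚ) = 0 := by
    simpa [aeval_def, eval₂_eq_eval_map] using (hζ.pow_of_coprime t ht).isRoot_cyclotomic hN
  have hQζ := congrArg (aeval (ζ ^ t)) hQ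
  rw [map_mul, hroot, zero_mul, map_sub, aeval_C, sub_eq_zero] at hQζ
  simpa using hQζ

lemma Matrix.exists_mulVec_eq_smul_of_mem_spectrum {ι K : Type*} [Fintype ι] [DecidableEq ι]
    [Field K] {A : Matrix ι ι K} {μ : K} (hμ : μ ∈ spectrum K A) : ∃ v ≠ 0, A *ᵥ v = μ • v := by
  rw [← Matrix.spectrum_toLin', ← Module.End.hasEigenvalue_iff_mem_spectrum] at hμ
  obtain ⟨v, hv⟩ := hμ.exists_hasEigenvector
  exact ⟨v, hv.2, hv.apply_eq_smul⟩

lemma Matrix.mem_spectrum_of_mulVec_eq_smul {ι K : Type*} [Fintype ι] [DecidableEq ι] [Field K]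
    {A : Matrix ι ι K} {v : ι → K} {μ : K} (hv : v ≠ 0) (h : A *ᵥ v = μ • v) :
    μ ∈ spectrum K A := by
  rw [← Matrix.spectrum_toLin']
  exact (Module.End.hasEigenvalue_of_hasEigenvector
    ⟨Module.End.mem_eigenspace_iff.2 h, hv⟩).mem_spectrum

lemma exists_ratCast_of_spectrum_int {a b b' : ℂ}
    (H : ∀ μ ∈ spectrum ℂ !![a, b'; b, a], ∃ z : ℤ, μ = z) :
    (∃ c : ℚ, a = c) ∧ ∃ c : ℚ, b * b' = c := by
  by_cases hb : b = 0
  · obtain ⟨z, hz⟩ := H a (Matrix.mem_spectrum_of_mulVec_eq_smul (v := ![1, 0]) (by simp)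
      (by ext i; fin_cases i <;> simp [hb]))
    exact ⟨⟨z, by simp [hz]⟩, ⟨0, by simp [hb]⟩⟩
  obtain ⟨t, ht⟩ := IsAlgClosed.exists_eq_mul_self (b * b')
  have hadd (s : ℂ) (hs : s * s = b * b') : ∃ z : ℤ, a + s = z := by
    refine H _ (Matrix.mem_spectrum_of_mulVec_eq_smul (v := ![s, b]) (by simp [hb]) ?_)
    rw [Matrix.mulVec_fin_two, Matrix.smul_vec2]
    refine Matrix.vec2_eq ?_ ?_
    · show a * s + b' * b = (a + s) * s
      linear_combination -hs
    · show b * s + a * b = (a + s) * b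
      ring
  obtain ⟨z₁, hz₁⟩ := hadd t ht.symm
  obtain ⟨z₂, hz₂⟩ := hadd (-t) (by rw [neg_mul_neg, ht])
  refine ⟨⟨(z₁ + z₂) / 2, ?_⟩, ⟨((z₁ - z₂) / 2) ^ 2, ?_⟩⟩
  · push_cast
    linear_combination (hz₁ + hz₂) / 2
  · push_cast
    rw [ht]
    linear_combination (hz₁ - hz₂) * (z₁ - z₂ + 2 * t) / 4

namespace ZMod

variable {N : ℕ}

lemma gcd_val_unit_mul (u : (ZMod N)ˣ) (x : ZMod N) :
    ((u : ZMod N) * x).val.gcd N = x.val.gcd N := by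
  rw [val_mul, ← Nat.gcd_rec, Nat.gcd_comm,
    Nat.Coprime.gcd_mul_left_cancel _ (val_coe_unit_coprime u)]

lemma gcd_val_natCast_of_dvd {d : ℕ} (hd : d ∣ N) : (d : ZMod N).val.gcd N = d := by
  rw [val_natCast, ← Nat.gcd_rec, Nat.gcd_eq_right hd]

lemma exists_unit_mul_eq_of_gcd_val_eq {k l : ZMod N} (h : k.val.gcd N = l.val.gcd N) :
    ∃ u : (ZMod N)ˣ, u * k = l := by
  obtain ⟨d, hd, u, hu, rfl⟩ := eq_unit_mul_divisor k
  obtain ⟨d', hd', u', hu', rfl⟩ := eq_unit_mul_divisor l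
  lift u to (ZMod N)ˣ using hu
  lift u' to (ZMod N)ˣ using hu'
  rw [gcd_val_unit_mul, gcd_val_unit_mul, gcd_val_natCast_of_dvd hd,
    gcd_val_natCast_of_dvd hd'] at h
  subst h
  exact ⟨u' * u⁻¹, by simp [mul_assoc]⟩

variable [NeZero N]

lemma stdAddChar_eq_pow_val (j : ZMod N) :
    stdAddChar j = Complex.exp (2 * Real.pi * Complex.I / N) ^ j.val := by
  rw [stdAddChar_apply, toCircle_apply, ← Complex.exp_nat_mul]
  ring_nf

lemma dft_unit_mul_eq_of_ratCast {g : ZMod N → ℚ}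
    (hg : ∀ k, ∃ c : ℚ, 𝓕 (fun j ↦ (g j : ℂ)) k = c) (u : (ZMod N)ˣ) (k : ZMod N) :
    𝓕 (fun j ↦ (g j : ℂ)) (u * k) = 𝓕 (fun j ↦ (g j : ℂ)) k := by
  obtain ⟨c, hc⟩ := hg k
  set ζ := Complex.exp (2 * Real.pi * Complex.I / N)
  set P : ℚ[X] := ∑ j, C (g j) * X ^ (-(j * k)).val
  have hP (z : ℂ) : aeval z P = ∑ j, z ^ (-(j * k)).val * g j := by
    simp only [P, map_sum, map_mul, aeval_C, map_pow, aeval_X, eq_ratCast]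
    exact Fintype.sum_congr _ _ fun j ↦ mul_comm _ _
  have hζP : aeval ζ P = c := by
    rw [hP, ← hc, dft_apply]
    simp [stdAddChar_eq_pow_val, ζ]
  have hζuP := (Complex.isPrimitiveRoot_exp N (NeZero.ne N)).aeval_pow_eq_ratCast
    (Nat.pos_of_neZero N) hζP (val_coe_unit_coprime u)
  rw [hc, ← hζuP, hP, dft_apply]
  refine Fintype.sum_congr _ _ fun j ↦ ?_
  rw [smul_eq_mul, ← pow_mul, mul_comm (u : ZMod N).val, pow_mul, ← stdAddChar_eq_pow_val,
    ← AddChar.map_nsmul_eq_pow, nsmul_eq_mul, natCast_zmod_val]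
  ring_nf

lemma apply_unit_mul_eq_of_dft_ratCast {g : ZMod N → ℚ}
    (hg : ∀ k, ∃ c : ℚ, 𝓕 (fun j ↦ (g j : ℂ)) k = c) (u : (ZMod N)ˣ) (k : ZMod N) :
    g (u * k) = g k := by
  have hinv : (fun j ↦ 𝓕 (fun j ↦ (g j : ℂ)) (u⁻¹.val * j)) = 𝓕 (fun j ↦ (g j : ℂ)) :=
    funext (dft_unit_mul_eq_of_ratCast hg u⁻¹)
  have hdual := dft_comp_unitMul (𝓕 fun j ↦ (g j : ℂ)) u⁻¹ (-k)
  rw [hinv, inv_inv, dft_dft] at hdual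
  simpa [NeZero.ne N] using hdual.symm

lemma eq_of_gcd_val_eq_of_dft_ratCast {g : ZMod N → ℚ}
    (hg : ∀ k, ∃ c : ℚ, 𝓕 (fun j ↦ (g j : ℂ)) k = c) {k l : ZMod N}
    (hkl : k.val.gcd N = l.val.gcd N) : g k = g l := by
  obtain ⟨u, rfl⟩ := exists_unit_mul_eq_of_gcd_val_eq hkl
  exact (apply_unit_mul_eq_of_dft_ratCast hg u k).symm

end ZMod

section CayleyGraph

variable {G : Type*} [Group G] {S : Set G}

lemma cayleyGraph_adj (hS : S⁻¹ = S) (h1 : 1 ∉ S) (x y : G) :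
    (cayleyGraph S).Adj x y ↔ x⁻¹ * y ∈ S := by
  rw [cayleyGraph, SimpleGraph.fromRel_adj]
  constructor
  · rintro ⟨-, hxy | hyx⟩
    · exact hxy
    · rw [← hS]
      simpa using hyx
  · intro hxy
    refine ⟨?_, Or.inl hxy⟩
    rintro rfl
    exact h1 (by simpa using hxy)

lemma adjMat_cayleyGraph_mulVec [Fintype G] (hS : S⁻¹ = S) (h1 : 1 ∉ S) (v : G → ℂ) (x : G) :
    (adjMat (cayleyGraph S) *ᵥ v) x = ∑ s, S.indicator 1 s * v (x * s) := by
  simp only [Matrix.mulVec, dotProduct, adjMat, Matrix.of_apply]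
  refine Fintype.sum_equiv (Equiv.mulLeft x⁻¹) _ _ fun y ↦ ?_
  by_cases hxy : x⁻¹ * y ∈ S <;> simp [hxy, cayleyGraph_adj hS h1]

end CayleyGraph

namespace DihedralGroup

variable {n : ℕ}

lemma r_notMem_of_subset_srSet {A : Set (DihedralGroup n)} (hA : A ⊆ srSet n) (k : ZMod n) :
    r k ∉ A := fun hk ↦ by
  obtain ⟨l, hl⟩ := hA hk
  cases hl

lemma sr_notMem_of_subset_rSet {A : Set (DihedralGroup n)} (hA : A ⊆ rSet n) (k : ZMod n) :
    sr k ∉ A := fun hk ↦ by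
  obtain ⟨l, hl⟩ := hA hk
  cases hl

variable [NeZero n]

lemma sum_univ {M : Type*} [AddCommMonoid M] (f : DihedralGroup n → M) :
    ∑ x, f x = ∑ k, f (r k) + ∑ k, f (sr k) := by
  rw [← Fintype.sum_equiv equivSum.symm (f ∘ equivSum.symm) f fun _ ↦ rfl, Fintype.sum_sum_type]
  rfl

noncomputable def rotIndicator (S : Set (DihedralGroup n)) (k : ZMod n) : ℂ :=
  S.indicator 1 (r k)

noncomputable def reflIndicator (S : Set (DihedralGroup n)) (k : ZMod n) : ℂ :=
  S.indicator 1 (sr k)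

noncomputable def fourierVec (h : ZMod n) (u w : ℂ) : DihedralGroup n → ℂ
  | r j => u * stdAddChar (-(j * h))
  | sr j => w * stdAddChar (j * h)

lemma fourierVec_ne_zero {h : ZMod n} {u w : ℂ} (huw : u ≠ 0 ∨ w ≠ 0) :
    fourierVec h u w ≠ 0 := by
  intro h0
  rcases huw with hu | hw
  · exact hu (by simpa [fourierVec] using congrFun h0 (r 0))
  · exact hw (by simpa [fourierVec] using congrFun h0 (sr 0))

lemma fourierVec_mul (h : ZMod n) (μ u w : ℂ) :
    fourierVec h (μ * u) (μ * w) = μ • fourierVec h u w := by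
  funext x
  cases x <;> simp [fourierVec, mul_assoc]

lemma dft_rotIndicator_neg {S : Set (DihedralGroup n)} (hS : S⁻¹ = S) (h : ZMod n) :
    𝓕 (rotIndicator S) (-h) = 𝓕 (rotIndicator S) h := by
  have heven : (fun k ↦ rotIndicator S (-k)) = rotIndicator S := by
    funext k
    classical
    simp only [rotIndicator, ← inv_r, Set.indicator_apply, ← Set.mem_inv, hS, Pi.one_apply]
  rw [← congrFun (dft_comp_neg _) h, heven]

lemma adjMat_mulVec_fourierVec {S : Set (DihedralGroup n)} (hS : S⁻¹ = S) (h1 : 1 ∉ S)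
    (h : ZMod n) (u w : ℂ) :
    adjMat (cayleyGraph S) *ᵥ fourierVec h u w =
      fourierVec h (𝓕 (rotIndicator S) h * u + 𝓕 (reflIndicator S) (-h) * w)
        (𝓕 (reflIndicator S) h * u + 𝓕 (rotIndicator S) h * w) := by
  funext x
  rw [adjMat_cayleyGraph_mulVec hS h1, sum_univ]
  rcases x with j | j
  · simp only [fourierVec, r_mul_r, r_mul_sr, dft_apply, smul_eq_mul, add_mul, Finset.sum_mul]
    congr 1 <;> refine Fintype.sum_congr _ _ fun k ↦ ?_
    · rw [show -(j * h + k * h) = -(k * h) + -(j * h) by ring, AddChar.map_add_eq_mul,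
        rotIndicator]
      ring
    · rw [show (k - j) * h = -(k * -h) + -(j * h) by ring, AddChar.map_add_eq_mul, reflIndicator]
      ring
  · rw [← dft_rotIndicator_neg hS]
    simp only [fourierVec, sr_mul_r, sr_mul_sr, dft_apply, smul_eq_mul, add_mul, Finset.sum_mul]
    rw [add_comm]
    congr 1 <;> refine Fintype.sum_congr _ _ fun k ↦ ?_
    · rw [show -((k - j) * h) = -(k * h) + j * h by ring, AddChar.map_add_eq_mul, reflIndicator]
      ring
    · rw [show j * h + k * h = -(k * -h) + j * h by ring, AddChar.map_add_eq_mul, rotIndicator]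
      ring

lemma spectrum_subset_spectrum_adjMat_cayleyGraph {S : Set (DihedralGroup n)} (hS : S⁻¹ = S)
    (h1 : 1 ∉ S) (h : ZMod n) :
    spectrum ℂ !![𝓕 (rotIndicator S) h, 𝓕 (reflIndicator S) (-h);
      𝓕 (reflIndicator S) h, 𝓕 (rotIndicator S) h] ⊆ spectrum ℂ (adjMat (cayleyGraph S)) := by
  intro μ hμ
  obtain ⟨v, hv, hμv⟩ := Matrix.exists_mulVec_eq_smul_of_mem_spectrum hμ
  refine Matrix.mem_spectrum_of_mulVec_eq_smul (v := fourierVec h (v 0) (v 1))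
    (fourierVec_ne_zero ?_) ?_
  · by_contra! hv0
    exact hv (funext fun i ↦ by fin_cases i <;> simp [hv0])
  · rw [Matrix.mulVec_fin_two] at hμv
    have hv₀ : 𝓕 (rotIndicator S) h * v 0 + 𝓕 (reflIndicator S) (-h) * v 1 = μ * v 0 :=
      congrFun hμv 0
    have hv₁ : 𝓕 (reflIndicator S) h * v 0 + 𝓕 (rotIndicator S) h * v 1 = μ * v 1 :=
      congrFun hμv 1
    rw [adjMat_mulVec_fourierVec hS h1, hv₀, hv₁, fourierVec_mul]

lemma sum_sqMult_mul (A : Set (DihedralGroup n)) (f : DihedralGroup n → ℂ) :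
    ∑ x, (sqMult A x : ℂ) * f x = ∑ p, ∑ q, A.indicator 1 p * A.indicator 1 q * f (p * q) := by
  classical
  have hcard (x : DihedralGroup n) : (sqMult A x : ℂ) =
      ∑ p : DihedralGroup n × DihedralGroup n,
        if p.1 ∈ A ∧ p.2 ∈ A ∧ p.1 * p.2 = x then 1 else 0 := by
    rw [sqMult, Nat.card_eq_fintype_card, Fintype.card_subtype, Finset.card_filter]
    push_cast
    rfl
  simp only [hcard, Finset.sum_mul]
  rw [Finset.sum_comm, Fintype.sum_prod_type]
  refine Fintype.sum_congr _ _ fun p ↦ Fintype.sum_congr _ _ fun q ↦ ?_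
  by_cases hp : p ∈ A <;> by_cases hq : q ∈ A <;> simp [hp, hq]

lemma dft_sqMult_of_subset_srSet {A : Set (DihedralGroup n)} (hA : A ⊆ srSet n) (h : ZMod n) :
    𝓕 (fun m ↦ (sqMult A (r m) : ℂ)) h = 𝓕 (reflIndicator A) h * 𝓕 (reflIndicator A) (-h) := by
  have hr (k : ZMod n) : A.indicator (1 : DihedralGroup n → ℂ) (r k) = 0 :=
    Set.indicator_of_notMem (r_notMem_of_subset_srSet hA k) _
  calc 𝓕 (fun m ↦ (sqMult A (r m) : ℂ)) h = ∑ x, (sqMult A x : ℂ) * fourierVec h 1 0 x := by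
        simp [sum_univ, dft_apply, fourierVec, mul_comm]
    _ = ∑ p, ∑ q, A.indicator 1 p * A.indicator 1 q * fourierVec h 1 0 (p * q) :=
        sum_sqMult_mul A _
    _ = ∑ k, ∑ l, reflIndicator A k * reflIndicator A l * stdAddChar (-((l - k) * h)) := by
        simp [sum_univ, hr, fourierVec, reflIndicator]
    _ = _ := by
        rw [dft_apply, dft_apply, Finset.sum_mul_sum, Finset.sum_comm]
        refine Fintype.sum_congr _ _ fun k ↦ Fintype.sum_congr _ _ fun l ↦ ?_
        rw [show -((k - l) * h) = -(k * h) + -(l * -h) by ring, AddChar.map_add_eq_mul]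
        simp only [smul_eq_mul]
        ring

end DihedralGroup

theorem stmt3_general (n : ℕ) [NeZero n]
    (S S₁ S₂ : Set (DihedralGroup n)) (hS : S = S₁ ∪ S₂)
    (h1 : (1 : DihedralGroup n) ∉ S) (hSinv : S⁻¹ = S)
    (hS₁ : S₁ ⊆ rSet n) (hS₂ : S₂ ⊆ srSet n)
    (hint : IsIntegralGraph (cayleyGraph S)) :
    InBooleanAlgebra n S₁ ∧
      ∀ k l : ZMod n, Nat.gcd k.val n = Nat.gcd l.val n →
        sqMult S₂ (DihedralGroup.r k) = sqMult S₂ (DihedralGroup.r l) := by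
  classical
  have hrat (h : ZMod n) := exists_ratCast_of_spectrum_int fun μ hμ ↦
    hint μ (spectrum_subset_spectrum_adjMat_cayleyGraph hSinv h1 h hμ)
  have hrot : rotIndicator S = fun k ↦ ((S₁.indicator 1 (r k) : ℚ) : ℂ) := by
    funext k
    by_cases hk : r k ∈ S₁ <;> simp [rotIndicator, hS, hk, r_notMem_of_subset_srSet hS₂ k]
  have hrefl : reflIndicator S = reflIndicator S₂ := by
    funext k
    simp [reflIndicator, Set.indicator_apply, hS, sr_notMem_of_subset_rSet hS₁ k]
  refine ⟨⟨hS₁, fun k l hkl ↦ ?_⟩, fun k l hkl ↦ ?_⟩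
  · have hind := eq_of_gcd_val_eq_of_dft_ratCast (g := fun k ↦ S₁.indicator 1 (r k))
      (fun h ↦ hrot ▸ (hrat h).1) hkl
    rw [← Set.indicator_eq_one_iff_mem ℚ, hind, Set.indicator_eq_one_iff_mem]
  · exact_mod_cast eq_of_gcd_val_eq_of_dft_ratCast (g := fun m ↦ (sqMult S₂ (r m) : ℚ))
      (fun h ↦ by push_cast; rw [dft_sqMult_of_subset_srSet hS₂, ← hrefl]; exact (hrat h).2) hkl

/-- Corollary 3.4. If `X(D_n,S)` is integral, then `S₁ ∈ B(⟨a⟩)` and the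
multiset `S₂²` (multiplicities over ordered pairs) lies in the integral cone `C(⟨a⟩)`,
i.e. its multiplicity function is constant on each atom of `⟨a⟩`. -/
theorem stmt3 (n : ℕ) (hn : 3 ≤ n) [NeZero n]
    (S S₁ S₂ : Set (DihedralGroup n)) (hS : S = S₁ ∪ S₂)
    (h1 : (1 : DihedralGroup n) ∉ S) (hSinv : S⁻¹ = S)
    (hS₁ : S₁ ⊆ rSet n) (hS₂ : S₂ ⊆ srSet n)
    (hint : IsIntegralGraph (cayleyGraph S)) :
    InBooleanAlgebra n S₁ ∧
      ∀ k l : ZMod n, Nat.gcd k.val n = Nat.gcd l.val n →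
        sqMult S₂ (DihedralGroup.r k) = sqMult S₂ (DihedralGroup.r l) :=
  stmt3_general n S S₁ S₂ hS h1 hSinv hS₁ hS₂ hint
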